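/- arXiv:2004.12740 — 2 statements merged into one kernel-verified Lean document; each statement's English description precedes it below -/
import Mathlib

section
/- For every star expression e, the identity function on the set of iterated derivatives of e is a provable solution (in BBP) of the chart interpretation of e: for every iterated derivative f of e with transitions f →a_i √ (i=1..m) and f →b_j f_j (f_j ≠ √), BBP proves f = (Σ a_i) + (Σ b_j · f_j). -/
/-- Star expressions over an alphabet `A` (without the constant 1, with binary Kleene star). -/
inductive StarExp (A : Type) : Type
  | zero : StarExp A
  | act : A → StarExp A
  | sum : StarExp A → StarExp A → StarExp A
  | prod : StarExp A → StarExp A → StarExp A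
  | star : StarExp A → StarExp A → StarExp A

namespace StarExp

/-- The star height of a star expression. -/
def height {A : Type} : StarExp A → ℕ
  | zero => 0
  | act _ => 0
  | sum e1 e2 => max e1.height e2.height
  | prod e1 e2 => max e1.height e2.height
  | star e1 e2 => max (e1.height + 1) e2.height

end StarExp
/-- The transition system of the process semantics: `Step e a ξ` means `e —a→ ξ`,
where `ξ` is either a star expression (`some e'`) or the termination symbol √ (`none`). -/
inductive Step {A : Type} : StarExp A → A → Option (StarExp A) → Prop
  | act (a : A) : Step (.act a) a none
  | sum_left {e1 : StarExp A} {a : A} {ξ : Option (StarExp A)} (e2 : StarExp A) :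
      Step e1 a ξ → Step (.sum e1 e2) a ξ
  | sum_right {e2 : StarExp A} {a : A} {ξ : Option (StarExp A)} (e1 : StarExp A) :
      Step e2 a ξ → Step (.sum e1 e2) a ξ
  | prod_left {e1 e1' : StarExp A} {a : A} (e2 : StarExp A) :
      Step e1 a (some e1') → Step (.prod e1 e2) a (some (.prod e1' e2))
  | prod_tick {e1 : StarExp A} {a : A} (e2 : StarExp A) :
      Step e1 a none → Step (.prod e1 e2) a (some e2)
  | star_left {e1 e1' : StarExp A} {a : A} (e2 : StarExp A) :
      Step e1 a (some e1') → Step (.star e1 e2) a (some (.prod e1' (.star e1 e2)))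
  | star_tick {e1 : StarExp A} {a : A} (e2 : StarExp A) :
      Step e1 a none → Step (.star e1 e2) a (some (.star e1 e2))
  | star_right {e2 : StarExp A} {a : A} {ξ : Option (StarExp A)} (e1 : StarExp A) :
      Step e2 a ξ → Step (.star e1 e2) a ξ

/-- Provable equality in the proof system BBP: equational logic together with the
axioms (B1)–(B7), (BKS1), (BKS2) and the fixed-point rule RSP*. -/
inductive BBP {A : Type} : StarExp A → StarExp A → Prop
  | refl (e : StarExp A) : BBP e e
  | symm {e f : StarExp A} : BBP e f → BBP f e
  | trans {e f g : StarExp A} : BBP e f → BBP f g → BBP e g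
  | sum_congr {e1 e2 f1 f2 : StarExp A} :
      BBP e1 f1 → BBP e2 f2 → BBP (.sum e1 e2) (.sum f1 f2)
  | prod_congr {e1 e2 f1 f2 : StarExp A} :
      BBP e1 f1 → BBP e2 f2 → BBP (.prod e1 e2) (.prod f1 f2)
  | star_congr {e1 e2 f1 f2 : StarExp A} :
      BBP e1 f1 → BBP e2 f2 → BBP (.star e1 e2) (.star f1 f2)
  | B1 (x y : StarExp A) : BBP (.sum x y) (.sum y x)
  | B2 (x y z : StarExp A) : BBP (.sum (.sum x y) z) (.sum x (.sum y z))
  | B3 (x : StarExp A) : BBP (.sum x x) x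
  | B4 (x y z : StarExp A) : BBP (.prod (.sum x y) z) (.sum (.prod x z) (.prod y z))
  | B5 (x y z : StarExp A) : BBP (.prod (.prod x y) z) (.prod x (.prod y z))
  | B6 (x : StarExp A) : BBP (.sum x .zero) x
  | B7 (x : StarExp A) : BBP (.prod .zero x) .zero
  | BKS1 (x y : StarExp A) : BBP (.sum (.prod x (.star x y)) y) (.star x y)
  | BKS2 (x y z : StarExp A) : BBP (.prod (.star x y) z) (.star x (.prod y z))
  | RSP {x y z : StarExp A} : BBP x (.sum (.prod y x) z) → BBP x (.star y z)

/-- The sum `Σ_{i=1}^k e_i` of a list of star expressions: `0` for the empty list,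
`e` for a singleton, and otherwise nested to the left. -/
def sumList {A : Type} : List (StarExp A) → StarExp A
  | [] => StarExp.zero
  | e :: es => es.foldl StarExp.sum e

/-- `f` is an iterated derivative of `e`: `f` is reachable from `e` via the
transition rules of the process-semantics TSS. -/
def IterDeriv {A : Type} (e f : StarExp A) : Prop :=
  Relation.ReflTransGen (fun x y => ∃ a : A, Step x a (some y)) e f

/-! Every star expression is BBP-provably the sum of the terms `a` (for `f —a→ √`) and `a · f'`
(for `f —a→ f'`) of its transitions, by structural induction: sums are immediate, a product
`e₁ · e₂` follows by distributing `e₂` over the expansion of `e₁` (B4, B7) and reassociating (B5),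
and a star `e₁ * e₂` is first unfolded to `e₁ · (e₁ * e₂) + e₂` by BKS1. Since `+` is
associative, commutative and idempotent with unit `0`, such a sum depends only on the set of its
summands, so any enumerations of the transitions give provably equal right-hand sides. -/

namespace BBP

variable {A : Type}

instance : Trans (@BBP A) (@BBP A) (@BBP A) := ⟨BBP.trans⟩

theorem sum_left_comm (x y z : StarExp A) : BBP (.sum x (.sum y z)) (.sum y (.sum x z)) :=
  calc BBP (.sum x (.sum y z)) (.sum (.sum x y) z) := (B2 x y z).symm
    BBP _ (.sum (.sum y x) z) := sum_congr (B1 x y) (refl z)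
    BBP _ (.sum y (.sum x z)) := B2 y x z

theorem foldl_sum (acc : StarExp A) (l : List (StarExp A)) :
    BBP (l.foldl .sum acc) (.sum acc (sumList l)) := by
  induction l generalizing acc with
  | nil => exact (B6 acc).symm
  | cons x l ih =>
    calc BBP (l.foldl .sum (.sum acc x)) (.sum (.sum acc x) (sumList l)) := ih _
      BBP _ (.sum acc (.sum x (sumList l))) := B2 acc x _
      BBP _ (.sum acc (l.foldl .sum x)) := sum_congr (refl acc) (ih x).symm

theorem sumList_cons (x : StarExp A) (l : List (StarExp A)) :
    BBP (sumList (x :: l)) (.sum x (sumList l)) :=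
  foldl_sum x l

theorem zero_sum (x : StarExp A) : BBP (.sum .zero x) x :=
  (B1 _ _).trans (B6 x)

theorem sumList_append (l₁ l₂ : List (StarExp A)) :
    BBP (sumList (l₁ ++ l₂)) (.sum (sumList l₁) (sumList l₂)) := by
  induction l₁ with
  | nil => exact (zero_sum _).symm
  | cons x l₁ ih =>
    calc BBP (sumList (x :: (l₁ ++ l₂))) (.sum x (sumList (l₁ ++ l₂))) := sumList_cons _ _
      BBP _ (.sum x (.sum (sumList l₁) (sumList l₂))) := sum_congr (refl x) ih
      BBP _ (.sum (.sum x (sumList l₁)) (sumList l₂)) := (B2 _ _ _).symm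
      BBP _ (.sum (sumList (x :: l₁)) (sumList l₂)) := sum_congr (sumList_cons _ _).symm (refl _)

theorem sumList_map_congr {α : Type*} (l : List α) {g h : α → StarExp A}
    (hgh : ∀ x, BBP (g x) (h x)) : BBP (sumList (l.map g)) (sumList (l.map h)) := by
  induction l with
  | nil => exact refl _
  | cons x l ih =>
    exact (sumList_cons _ _).trans ((sum_congr (hgh x) ih).trans (sumList_cons _ _).symm)

theorem prod_sumList (l : List (StarExp A)) (z : StarExp A) :
    BBP (.prod (sumList l) z) (sumList (l.map (.prod · z))) := by
  induction l with
  | nil => exact B7 z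
  | cons x l ih =>
    calc BBP (.prod (sumList (x :: l)) z) (.prod (.sum x (sumList l)) z) :=
          prod_congr (sumList_cons x l) (refl z)
      BBP _ (.sum (.prod x z) (.prod (sumList l) z)) := B4 x _ z
      BBP _ (.sum (.prod x z) (sumList (l.map (.prod · z)))) := sum_congr (refl _) ih
      BBP _ (sumList ((x :: l).map (.prod · z))) := (sumList_cons _ _).symm

theorem sum_sumList_of_mem {x : StarExp A} {l : List (StarExp A)} (hx : x ∈ l) :
    BBP (.sum x (sumList l)) (sumList l) := by
  induction l with
  | nil => cases hx
  | cons y l ih =>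
    refine (sum_congr (refl x) (sumList_cons y l)).trans (BBP.trans ?_ (sumList_cons y l).symm)
    rcases List.mem_cons.mp hx with rfl | hx
    · exact (B2 x x _).symm.trans (sum_congr (B3 x) (refl _))
    · exact (sum_left_comm x y _).trans (sum_congr (refl y) (ih hx))

theorem sum_sumList_of_subset {l₁ l₂ : List (StarExp A)} (h : l₁ ⊆ l₂) :
    BBP (.sum (sumList l₁) (sumList l₂)) (sumList l₂) := by
  induction l₁ with
  | nil => exact zero_sum _
  | cons x l₁ ih =>
    obtain ⟨hx, hl₁⟩ := List.cons_subset.mp h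
    calc BBP (.sum (sumList (x :: l₁)) (sumList l₂)) (.sum (.sum x (sumList l₁)) (sumList l₂)) :=
          sum_congr (sumList_cons x l₁) (refl _)
      BBP _ (.sum x (.sum (sumList l₁) (sumList l₂))) := B2 _ _ _
      BBP _ (.sum x (sumList l₂)) := sum_congr (refl x) (ih hl₁)
      BBP _ (sumList l₂) := sum_sumList_of_mem hx

theorem sumList_of_mem_iff {l₁ l₂ : List (StarExp A)} (h : ∀ x, x ∈ l₁ ↔ x ∈ l₂) :
    BBP (sumList l₁) (sumList l₂) :=
  calc BBP (sumList l₁) (.sum (sumList l₂) (sumList l₁)) :=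
        (sum_sumList_of_subset fun x hx => (h x).mpr hx).symm
    BBP _ (.sum (sumList l₁) (sumList l₂)) := B1 _ _
    BBP _ (sumList l₂) := sum_sumList_of_subset fun x hx => (h x).mp hx

end BBP

namespace StarExp

variable {A : Type}

/-- A transition of `e` to `ξ` yields one of `e · z` to `seqTarget ξ z`, reading `√ · z` as `z`. -/
def seqTarget : Option (StarExp A) → StarExp A → StarExp A
  | none, z => z
  | some e', z => .prod e' z

def transitionTerm : A × Option (StarExp A) → StarExp A
  | (a, none) => .act a
  | (a, some e') => .prod (.act a) e'

def transitions : StarExp A → List (A × Option (StarExp A))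
  | zero => []
  | act a => [(a, none)]
  | sum e₁ e₂ => e₁.transitions ++ e₂.transitions
  | prod e₁ e₂ => e₁.transitions.map fun t => (t.1, some (seqTarget t.2 e₂))
  | star e₁ e₂ =>
    (e₁.transitions.map fun t => (t.1, some (seqTarget t.2 (star e₁ e₂)))) ++ e₂.transitions

theorem step_of_mem_transitions {e : StarExp A} {a : A} {ξ : Option (StarExp A)}
    (h : (a, ξ) ∈ e.transitions) : Step e a ξ := by
  induction e generalizing a ξ with
  | zero => cases h
  | act b =>
    obtain ⟨rfl, rfl⟩ : a = b ∧ ξ = none := by simpa [transitions] using h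
    exact .act a
  | sum e₁ e₂ ih₁ ih₂ =>
    rcases List.mem_append.mp h with h | h
    · exact .sum_left e₂ (ih₁ h)
    · exact .sum_right e₁ (ih₂ h)
  | prod e₁ e₂ ih₁ _ =>
    obtain ⟨η, hη, rfl⟩ : ∃ η, (a, η) ∈ e₁.transitions ∧ some (seqTarget η e₂) = ξ := by
      simpa [transitions] using h
    cases η with
    | none => exact .prod_tick e₂ (ih₁ hη)
    | some e₁' => exact .prod_left e₂ (ih₁ hη)
  | star e₁ e₂ ih₁ ih₂ =>
    rcases List.mem_append.mp h with h | h
    · obtain ⟨η, hη, rfl⟩ :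
          ∃ η, (a, η) ∈ e₁.transitions ∧ some (seqTarget η (star e₁ e₂)) = ξ := by
        simpa using h
      cases η with
      | none => exact .star_tick e₂ (ih₁ hη)
      | some e₁' => exact .star_left e₂ (ih₁ hη)
    · exact .star_right e₁ (ih₂ h)

theorem mem_transitions_of_step {e : StarExp A} {a : A} {ξ : Option (StarExp A)}
    (h : Step e a ξ) : (a, ξ) ∈ e.transitions := by
  induction h with
  | act => exact List.mem_singleton_self _
  | sum_left _ _ ih => exact List.mem_append_left _ ih
  | sum_right _ _ ih => exact List.mem_append_right _ ih
  | prod_left _ _ ih | prod_tick _ _ ih => exact List.mem_map_of_mem ih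
  | star_left _ _ ih | star_tick _ _ ih => exact List.mem_append_left _ (List.mem_map_of_mem ih)
  | star_right _ _ ih => exact List.mem_append_right _ ih

theorem mem_transitions_iff {e : StarExp A} {a : A} {ξ : Option (StarExp A)} :
    (a, ξ) ∈ e.transitions ↔ Step e a ξ :=
  ⟨step_of_mem_transitions, mem_transitions_of_step⟩

end StarExp

namespace BBP

open StarExp

variable {A : Type}

theorem transitionTerm_prod (t : A × Option (StarExp A)) (z : StarExp A) :
    BBP (.prod (transitionTerm t) z) (transitionTerm (t.1, some (seqTarget t.2 z))) := by
  obtain ⟨a, _ | e'⟩ := t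
  · exact refl _
  · exact B5 _ _ _

theorem prod_expansion {e : StarExp A}
    (he : BBP e (sumList (e.transitions.map transitionTerm))) (z : StarExp A) :
    BBP (.prod e z)
      (sumList ((e.transitions.map fun t => (t.1, some (seqTarget t.2 z))).map transitionTerm)) :=
  calc BBP (.prod e z) (.prod (sumList (e.transitions.map transitionTerm)) z) :=
        prod_congr he (refl z)
    BBP _ (sumList (e.transitions.map fun t => .prod (transitionTerm t) z)) := by
        simpa only [List.map_map, Function.comp_def] using
          prod_sumList (e.transitions.map transitionTerm) z
    BBP _ _ := by
        simpa only [List.map_map, Function.comp_def] using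
          sumList_map_congr _ fun t => transitionTerm_prod t z

theorem expansion (e : StarExp A) : BBP e (sumList (e.transitions.map transitionTerm)) := by
  induction e with
  | zero | act _ => exact refl _
  | sum e₁ e₂ ih₁ ih₂ =>
    simpa only [transitions, List.map_append] using
      (sum_congr ih₁ ih₂).trans (sumList_append _ _).symm
  | prod e₁ e₂ ih₁ _ => exact prod_expansion ih₁ e₂
  | star e₁ e₂ ih₁ ih₂ =>
    simpa only [transitions, List.map_append] using
      (BKS1 e₁ e₂).symm.trans
        ((sum_congr (prod_expansion ih₁ _) ih₂).trans (sumList_append _ _).symm)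

end BBP

theorem id_is_provable_solution_general {A : Type} (f : StarExp A)
    (as : List A) (bs : List (A × StarExp A))
    (has : ∀ a : A, a ∈ as ↔ Step f a none)
    (hbs : ∀ p : A × StarExp A, p ∈ bs ↔ Step f p.1 (some p.2)) :
    BBP f (StarExp.sum (sumList (as.map StarExp.act))
      (sumList (bs.map fun p => StarExp.prod (StarExp.act p.1) p.2))) := by
  refine (BBP.expansion f).trans
    ((BBP.sumList_of_mem_iff fun x => ?_).trans (BBP.sumList_append _ _))
  simp only [List.mem_map, List.mem_append, Prod.exists, Option.exists, exists_or,
    ← StarExp.mem_transitions_iff, has, hbs, StarExp.transitionTerm]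

/-- The identity function on the iterated derivatives of `e` is a provable solution
of the chart interpretation of `e`: for every iterated derivative `f` of `e`, if
`as` enumerates the actions of the transitions `f —a→ √` and `bs` enumerates the
pairs of the transitions `f —b→ f'` with `f' ≠ √`, then BBP proves
`f = (Σ a_i) + (Σ b_j · f_j)`. -/
theorem id_is_provable_solution {A : Type} (e f : StarExp A) (hf : IterDeriv e f)
    (as : List A) (bs : List (A × StarExp A))
    (has : ∀ a : A, a ∈ as ↔ Step f a none)
    (hbs : ∀ p : A × StarExp A, p ∈ bs ↔ Step f p.1 (some p.2)) :
    BBP f (StarExp.sum (sumList (as.map StarExp.act))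
      (sumList (bs.map fun p => StarExp.prod (StarExp.act p.1) p.2))) :=
  id_is_provable_solution_general f as bs has hbs
end

section
/- In a chart with a LLEE-witness, if u ⇢* v ⇢* w (u loops back, in finitely many steps, to v, and v to w), then every path of body transitions from u to w visits v. -/
/-!
Reversing `⇢` gives descents: `u ⇢* v` yields `v ↓* u`. A chain of descents `v ↓⁺ u` followed by a
body path from `u` that avoids `v` is again a chain of descents `v ↓⁺ z`: the path either stays
inside the innermost loop, extending its last descent, or re-enters that loop's top vertex, to which
`v` already descends. Hence a body path from `u` to `w` missing `v` would give
`v ↓⁺ w ↓* v`, a cycle of descents; by layeredness the entry levels strictly decrease along it,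
which is absurd.
-/

/-- An entry/body-labeled finite chart: a rooted labelled transition system with
termination sink `tick` (√), start vertex `start`, and transitions carrying an
action from `A` together with a marking label in ℕ (label `0` marks body
transitions, positive labels mark entry transitions).  Every vertex other than
possibly `tick` is reachable from the start vertex. -/
structure LChart (V : Type) (A : Type) : Type where
  tick : V
  start : V
  Tr : V → A → ℕ → V → Prop
  tick_no_out : ∀ (a : A) (n : ℕ) (w : V), ¬ Tr tick a n w
  start_ne_tick : start ≠ tick
  connected : ∀ v : V, v = tick ∨
    Relation.ReflTransGen (fun x y => ∃ (a : A) (n : ℕ), Tr x a n y) start v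

namespace LChart

variable {V A : Type}

/-- Body transition step (marking label `0`). -/
def BStep (C : LChart V A) (x y : V) : Prop := ∃ a : A, C.Tr x a 0 y

/-- Entry transition step of level `α > 0`. -/
def EStep (C : LChart V A) (α : ℕ) (x y : V) : Prop := 0 < α ∧ ∃ a : A, C.Tr x a α y

/-- A transition step of any kind. -/
def AnyStep (C : LChart V A) (x y : V) : Prop := ∃ (a : A) (n : ℕ), C.Tr x a n y

/-- There is an entry transition of level `α` departing from `v`. -/
def HasEntry (C : LChart V A) (v : V) (α : ℕ) : Prop :=
  0 < α ∧ ∃ (a : A) (w : V), C.Tr v a α w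

/-- `v` descends in a loop of level `α` to `w`: there is a path from `v` to `w`
starting with an `α`-entry transition and continuing with body transitions, in
which all transition targets avoid `v`. -/
def Descends (C : LChart V A) (v : V) (α : ℕ) (w : V) : Prop :=
  ∃ u : V, C.EStep α v u ∧ u ≠ v ∧
    Relation.ReflTransGen (fun x y => C.BStep x y ∧ y ≠ v) u w

/-- `v` descends in a loop to `w` (at some level). -/
def Desc (C : LChart V A) (v w : V) : Prop := ∃ α : ℕ, C.Descends v α w

/-- An infinite path from `v` in the loop subchart `C[v,α]`: it starts at `v`,
takes an `α`-entry transition whenever it is at `v`, and body transitions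
otherwise. -/
def LoopSeq (C : LChart V A) (v : V) (α : ℕ) (f : ℕ → V) : Prop :=
  f 0 = v ∧ ∀ n : ℕ,
    (f n = v → C.EStep α (f n) (f (n + 1))) ∧ (f n ≠ v → C.BStep (f n) (f (n + 1)))

/-- The conditions (W1), (W2)(a) (the subchart `C[v,α]` is a loop chart, i.e.
(L1) an infinite path from `v` exists, (L2) every infinite path from `v`
returns to `v` after a positive number of steps, (L3) √ is not a vertex of
`C[v,α]`), and (W2)(b) (layeredness) for an entry/body-labeling to be a
LLEE-witness. -/
structure IsLLEE (C : LChart V A) : Prop where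
  w1 : ¬ ∃ f : ℕ → V, f 0 = C.start ∧ ∀ n : ℕ, C.BStep (f n) (f (n + 1))
  w2a_L1 : ∀ (v : V) (α : ℕ), C.HasEntry v α → ∃ f : ℕ → V, C.LoopSeq v α f
  w2a_L2 : ∀ (v : V) (α : ℕ), C.HasEntry v α →
    ∀ f : ℕ → V, C.LoopSeq v α f → ∃ n : ℕ, 0 < n ∧ f n = v
  w2a_L3 : ∀ (v : V) (α : ℕ), ¬ C.Descends v α C.tick
  w2b : ∀ (v w : V) (α : ℕ), C.Descends v α w → ∀ β : ℕ, α ≤ β → ¬ C.HasEntry w β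

/-- `u` and `v` lie in the same strongly connected component. -/
def SameSCC (C : LChart V A) (u v : V) : Prop :=
  Relation.ReflTransGen C.AnyStep u v ∧ Relation.ReflTransGen C.AnyStep v u

/-- `w` loops back to `v`: `v` descends in a loop to `w` and there is a nonempty
path of body transitions from `w` back to `v`. -/
def LoopsBack (C : LChart V A) (w v : V) : Prop :=
  C.Desc v w ∧ Relation.TransGen C.BStep w v

/-- `w` directly loops back to `v`. -/
def DLoopsBack (C : LChart V A) (w v : V) : Prop :=
  C.LoopsBack w v ∧ ∀ u : V, C.LoopsBack w u → u = v ∨ C.LoopsBack v u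

end LChart

open Relation

theorem Relation.ReflTransGen.avoids_or_reflTransGen_from {α : Type*} {r : α → α → Prop}
    {a b : α} (y : α) (h : ReflTransGen r a b) :
    ReflTransGen (fun p q => r p q ∧ q ≠ y) a b ∨ ReflTransGen r y b := by
  induction h with
  | refl => exact .inl .refl
  | @tail b c _ hbc ih =>
    by_cases hcy : c = y
    · exact .inr (hcy ▸ .refl)
    · exact ih.imp (·.tail ⟨hbc, hcy⟩) (·.tail hbc)

namespace LChart

variable {V A : Type} {C : LChart V A}

theorem Descends.hasEntry {v w : V} {α : ℕ} (h : C.Descends v α w) : C.HasEntry v α := by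
  obtain ⟨u, ⟨hα, a, htr⟩, -, -⟩ := h
  exact ⟨hα, a, u, htr⟩

theorem Descends.extend {v w z : V} {α : ℕ} (h : C.Descends v α w)
    (hp : ReflTransGen (fun x y => C.BStep x y ∧ y ≠ v) w z) : C.Descends v α z := by
  obtain ⟨u, he, hne, hpath⟩ := h
  exact ⟨u, he, hne, hpath.trans hp⟩

theorem reflTransGen_desc_of_reflTransGen_loopsBack {u v : V}
    (h : ReflTransGen C.LoopsBack u v) : ReflTransGen C.Desc v u :=
  reflTransGen_swap.mp (ReflTransGen.mono (fun _ _ => And.left) _ _ h)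

theorem transGen_desc_of_avoiding_bodyPath {v u z : V} (hvu : TransGen C.Desc v u)
    (hp : ReflTransGen (fun x y => C.BStep x y ∧ y ≠ v) u z) : TransGen C.Desc v z := by
  induction hvu generalizing z with
  | single hvu =>
    obtain ⟨α, hd⟩ := hvu
    exact .single ⟨α, hd.extend hp⟩
  | @tail y u hvy hyu ih =>
    obtain ⟨α, hd⟩ := hyu
    rcases hp.avoids_or_reflTransGen_from y with hq | hyz
    · exact hvy.tail ⟨α, hd.extend (ReflTransGen.mono (fun _ _ h => ⟨h.1.1, h.2⟩) _ _ hq)⟩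
    · exact ih hyz

namespace IsLLEE

theorem exists_level_of_transGen_desc (hL : C.IsLLEE) {a b : V} (h : TransGen C.Desc a b) :
    ∃ α : ℕ, C.HasEntry a α ∧ ∀ β : ℕ, α ≤ β → ¬ C.HasEntry b β := by
  induction h with
  | single hab =>
    obtain ⟨α, hd⟩ := hab
    exact ⟨α, hd.hasEntry, hL.w2b _ _ _ hd⟩
  | tail _ hbc ih =>
    obtain ⟨γ, hd⟩ := hbc
    obtain ⟨α, ha, hb⟩ := ih
    have hγα : γ < α := lt_of_not_ge fun hle => hb γ hle hd.hasEntry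
    exact ⟨α, ha, fun β hβ => hL.w2b _ _ _ hd β (hγα.le.trans hβ)⟩

theorem not_transGen_desc_self (hL : C.IsLLEE) (v : V) : ¬ TransGen C.Desc v v := fun hvv =>
  let ⟨α, hα, hno⟩ := hL.exists_level_of_transGen_desc hvv
  hno α le_rfl hα

end IsLLEE

end LChart

theorem loopsBack_body_path_visits_general {V A : Type} (C : LChart V A)
    (h : C.IsLLEE) (u v w : V)
    (huv : Relation.ReflTransGen C.LoopsBack u v)
    (hvw : Relation.ReflTransGen C.LoopsBack v w)
    (xs : List V) (hchain : List.Chain C.BStep u xs)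
    (hlast : (u :: xs).getLast (List.cons_ne_nil u xs) = w) :
    v ∈ u :: xs := by
  by_contra hv
  have hxs : ∀ x ∈ xs, x ≠ v := fun x hx hxv => hv (hxv ▸ List.mem_cons_of_mem u hx)
  have hpath : ReflTransGen (fun x y => C.BStep x y ∧ y ≠ v) u w :=
    List.relationReflTransGen_of_exists_isChain_cons xs
      (List.IsChain.imp_of_mem_tail_imp (fun _ b _ hb hstep => ⟨hstep, hxs b hb⟩) hchain) hlast
  have hvu : TransGen C.Desc v u :=
    (reflTransGen_iff_eq_or_transGen.mp
      (LChart.reflTransGen_desc_of_reflTransGen_loopsBack huv)).resolve_left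
      fun hvu => hv (hvu ▸ List.mem_cons_self)
  exact h.not_transGen_desc_self v <|
    (LChart.transGen_desc_of_avoiding_bodyPath hvu hpath).trans_left
      (LChart.reflTransGen_desc_of_reflTransGen_loopsBack hvw)

/-- If `u ⇢* v ⇢* w`, then every path of body transitions from `u` to `w`
visits `v`. -/
theorem loopsBack_body_path_visits {V A : Type} [Finite V] (C : LChart V A)
    (h : C.IsLLEE) (u v w : V)
    (huv : Relation.ReflTransGen C.LoopsBack u v)
    (hvw : Relation.ReflTransGen C.LoopsBack v w)
    (xs : List V) (hchain : List.Chain C.BStep u xs)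
    (hlast : (u :: xs).getLast (List.cons_ne_nil u xs) = w) :
    v ∈ u :: xs :=
  loopsBack_body_path_visits_general C h u v w huv hvw xs hchain hlast
end
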